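/- arXiv:2112.14321 — 2 statements merged into one kernel-verified Lean document; each statement's English description precedes it below -/
import Mathlib

section
/- The reciprocal square root of a positive binary floating-point number is never the exact midpoint of two consecutive floating-point numbers: for x ∈ 𝔽, x > 0, 1/√x is either in 𝔽 or is not of the form (a+b)/2 for consecutive a, b ∈ 𝔽. -/
/-!
If `1/√x` is the midpoint of two floats, it is a dyadic rational `m · 2^e`. Then so is
`√x = x · (1/√x)`, so `1/√x` is a unit of the ring `ℤ[1/2]`, i.e. a power of two (it is
positive), and powers of two are floats at every positive precision.
-/

/-- The set of radix-2 floating-point numbers of precision `p`: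
real numbers of the form `M · 2^E` with `M, E` integers and `|M| < 2^p`. -/
def Fp (p : ℕ) : Set ℝ := {x : ℝ | ∃ M E : ℤ, |M| < 2 ^ p ∧ x = (M : ℝ) * (2 : ℝ) ^ E}

/-- `b` is the successor of `a` in `Fp p`: they are consecutive floats. -/
def FpConsecutive (p : ℕ) (a b : ℝ) : Prop :=
  a ∈ Fp p ∧ b ∈ Fp p ∧ a < b ∧ ∀ f ∈ Fp p, ¬(a < f ∧ f < b)

/-- `r` has a representation with an even significand at precision `p`. -/
def FpEven (p : ℕ) (r : ℝ) : Prop :=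
  ∃ M E : ℤ, |M| < 2 ^ p ∧ 2 ∣ M ∧ r = (M : ℝ) * (2 : ℝ) ^ E

/-- `r` is a round-to-nearest, ties-to-even value of the real `x` at precision `p`. -/
def RNE (p : ℕ) (x r : ℝ) : Prop :=
  r ∈ Fp p ∧ (∀ f ∈ Fp p, |r - x| ≤ |f - x|) ∧
    ((∃ f ∈ Fp p, f ≠ r ∧ |f - x| = |r - x|) → FpEven p r)

def IsDyadic (y : ℝ) : Prop := ∃ m e : ℤ, y = m * 2 ^ e

namespace IsDyadic

theorem of_mem_Fp {p : ℕ} {x : ℝ} (hx : x ∈ Fp p) : IsDyadic x :=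
  let ⟨M, E, _, h⟩ := hx
  ⟨M, E, h⟩

theorem mul {y z : ℝ} : IsDyadic y → IsDyadic z → IsDyadic (y * z)
  | ⟨m, e, hy⟩, ⟨n, f, hz⟩ =>
    ⟨m * n, e + f, by rw [hy, hz, zpow_add₀ two_ne_zero]; push_cast; ring⟩

theorem div_two {y : ℝ} (hy : IsDyadic y) : IsDyadic (y / 2) :=
  div_eq_mul_inv y 2 ▸ hy.mul ⟨1, -1, by simp⟩

theorem add {y z : ℝ} (hy : IsDyadic y) (hz : IsDyadic z) : IsDyadic (y + z) := by
  obtain ⟨m, e, rfl⟩ := hy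
  obtain ⟨n, f, rfl⟩ := hz
  wlog hef : e ≤ f generalizing m n e f
  · rw [add_comm]
    exact this n f m e (le_of_not_ge hef)
  obtain ⟨k, rfl⟩ := Int.le.dest hef
  exact ⟨m + n * 2 ^ k, e, by rw [zpow_add₀ two_ne_zero, zpow_natCast]; push_cast; ring⟩

theorem exists_odd_mul_zpow {y : ℝ} (hy : IsDyadic y) (hy0 : y ≠ 0) :
    ∃ n e : ℤ, ¬2 ∣ n ∧ y = n * 2 ^ e := by
  obtain ⟨m, e, rfl⟩ := hy
  have hm : m ≠ 0 := by rintro rfl; simp at hy0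
  obtain ⟨n, hmn, hn⟩ :=
    (Int.finiteMultiplicity_iff (a := 2).mpr ⟨by decide, hm⟩).exists_eq_pow_mul_and_not_dvd
  generalize multiplicity 2 m = k at hmn
  exact ⟨n, e + k, hn, by rw [hmn, zpow_add₀ two_ne_zero, zpow_natCast]; push_cast; ring⟩

theorem eq_zpow_two_of_mul_eq_one {y z : ℝ} (hy : IsDyadic y) (hz : IsDyadic z)
    (hyz : y * z = 1) (hy0 : 0 < y) : ∃ k : ℤ, y = 2 ^ k := by
  obtain ⟨n, e, hn, rfl⟩ := hy.exists_odd_mul_zpow hy0.ne'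
  obtain ⟨m, f, rfl⟩ := hz
  set d := e + f
  have hsplit : (2 : ℝ) ^ d.toNat = 2 ^ d * 2 ^ (-d).toNat := by
    rw [← zpow_natCast, ← zpow_natCast, ← zpow_add₀ two_ne_zero]
    congr 1
    omega
  -- Clearing the negative part of the exponent: the odd `n` divides a power of two in `ℤ`.
  have hprod : n * (m * 2 ^ d.toNat) = 2 ^ (-d).toNat := by
    have : (n * (m * 2 ^ d.toNat) : ℝ) = 2 ^ (-d).toNat := by
      rw [hsplit, zpow_add₀ two_ne_zero]
      linear_combination (2 : ℝ) ^ (-d).toNat * hyz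
    exact_mod_cast this
  have hcop : IsCoprime n (2 ^ (-d).toNat) :=
    ((Int.prime_two.irreducible.coprime_iff_not_dvd).mpr hn).symm.pow_right
  rcases Int.isUnit_iff.mp (hcop.isUnit_of_dvd' (dvd_refl n) (Dvd.intro _ hprod)) with rfl | rfl
  · exact ⟨e, by simp⟩
  · exact absurd hy0 (by simp [zpow_nonneg])

end IsDyadic

theorem prec_ne_zero_of_mem_Fp {p : ℕ} {x : ℝ} (hx : x ∈ Fp p) (hx0 : x ≠ 0) : p ≠ 0 := by
  rintro rfl
  obtain ⟨M, E, hM, rfl⟩ := hx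
  simp_all

theorem zpow_two_mem_Fp {p : ℕ} (hp : p ≠ 0) (k : ℤ) : (2 : ℝ) ^ k ∈ Fp p :=
  ⟨1, k, by simpa using one_lt_pow₀ one_lt_two hp, by simp⟩

/-- The reciprocal square root of a positive precision-`p` binary float is either itself a float
or is never the exact midpoint of two consecutive floats. -/
theorem rsqrt_not_midpoint (p : ℕ) (x : ℝ) (hx : x ∈ Fp p) (hxpos : 0 < x) :
    1 / Real.sqrt x ∈ Fp p ∨
      ∀ a b : ℝ, FpConsecutive p a b → 1 / Real.sqrt x ≠ (a + b) / 2 := by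
  refine or_iff_not_imp_right.mpr fun hmid => ?_
  push Not at hmid
  obtain ⟨a, b, ⟨ha, hb, -⟩, hab⟩ := hmid
  have hs : 0 < √x := Real.sqrt_pos.mpr hxpos
  have hy : IsDyadic (1 / √x) :=
    hab ▸ ((IsDyadic.of_mem_Fp ha).add (.of_mem_Fp hb)).div_two
  have hsqrt : IsDyadic √x := by
    have : √x = x * (1 / √x) := by
      field_simp
      exact Real.sq_sqrt hxpos.le
    exact this ▸ (IsDyadic.of_mem_Fp hx).mul hy
  obtain ⟨k, hk⟩ := hy.eq_zpow_two_of_mul_eq_one hsqrt (one_div_mul_cancel hs.ne') (by positivity)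
  exact hk ▸ zpow_two_mem_Fp (prec_ne_zero_of_mem_Fp hx hxpos.ne') k
end

section
/- For x > 0, y > 0 with ν defined by √(1/x) = y(1+ν), |ν| < 1, and ν̄ = (1-x y²)/2, the Halley-compensated value y_H = y + y·ν̄(1 + (3/2)ν̄) satisfies |y_H - √(1/x)| ≤ C·y·|ν|³ for an explicit constant C (e.g. C = 20) when |ν| ≤ 1/4. -/
/-!
Squaring `√(1/x) = y(1+ν)` gives `x y² = 1/(1+ν)²`, and clearing denominators then shows
`y_H - y(1+ν) = -y ν³ (20 + 25ν + 8ν²) / (8(1+ν)⁴)`: the Halley step cancels the error terms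
of order one and two. For `|ν| ≤ 1/4` the rational factor is at most
`(20 + 25/4 + 1/2) / (8 (3/4)⁴) < 20`.
-/

lemma mul_sq_eq_one_div_sq_of_sqrt_one_div_eq {x y t : ℝ} (hx : 0 < x) (ht : t ≠ 0)
    (h : √(1 / x) = y * t) : x * y ^ 2 = 1 / t ^ 2 := by
  have hsq : 1 / x = (y * t) ^ 2 := by rw [← h, Real.sq_sqrt (by positivity)]
  field_simp at hsq ⊢
  linear_combination -hsq

lemma halley_error_eq (y ν : ℝ) (hν : 1 + ν ≠ 0) :
    y + y * ((1 - 1 / (1 + ν) ^ 2) / 2) * (1 + 3 / 2 * ((1 - 1 / (1 + ν) ^ 2) / 2)) - y * (1 + ν) =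
      -(y * ν ^ 3) * ((20 + 25 * ν + 8 * ν ^ 2) / (8 * (1 + ν) ^ 4)) := by
  field_simp
  ring

section
variable {ν : ℝ} (hν : |ν| ≤ 1 / 4)
include hν

lemma halley_error_factor_nonneg : 0 ≤ (20 + 25 * ν + 8 * ν ^ 2) / (8 * (1 + ν) ^ 4) := by
  have := neg_abs_le ν
  apply div_nonneg <;> nlinarith [sq_nonneg ν]

lemma halley_error_factor_le : (20 + 25 * ν + 8 * ν ^ 2) / (8 * (1 + ν) ^ 4) ≤ 20 := by
  obtain ⟨hν₁, hν₂⟩ := abs_le.mp hν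
  have hpow : (3 / 4 : ℝ) ^ 4 ≤ (1 + ν) ^ 4 := pow_le_pow_left₀ (by norm_num) (by linarith) 4
  rw [div_le_iff₀ (by positivity)]
  nlinarith

lemma abs_halley_error_le {y : ℝ} (hy : 0 ≤ y) :
    |y + y * ((1 - 1 / (1 + ν) ^ 2) / 2) * (1 + 3 / 2 * ((1 - 1 / (1 + ν) ^ 2) / 2)) -
        y * (1 + ν)| ≤ 20 * y * |ν| ^ 3 := by
  have ht : 0 < 1 + ν := by linarith [neg_abs_le ν]
  rw [halley_error_eq y ν ht.ne', abs_mul, abs_neg, abs_mul, abs_of_nonneg hy, abs_pow,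
    abs_of_nonneg (halley_error_factor_nonneg hν)]
  calc y * |ν| ^ 3 * ((20 + 25 * ν + 8 * ν ^ 2) / (8 * (1 + ν) ^ 4))
      ≤ y * |ν| ^ 3 * 20 := by gcongr; exact halley_error_factor_le hν
    _ = 20 * y * |ν| ^ 3 := by ring

end

/-- Exact-arithmetic Halley compensation: with `√(1/x) = y(1+ν)`, `|ν| ≤ 1/4`, and
`ν̄ = (1 - x y²)/2`, the value `y_H = y + y·ν̄(1 + (3/2)ν̄)` satisfies
`|y_H - √(1/x)| ≤ 20·y·|ν|³`. -/
theorem halley_compensation_error (x y ν : ℝ) (hx : 0 < x) (hy : 0 < y)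
    (hν : |ν| ≤ 1 / 4) (h : Real.sqrt (1 / x) = y * (1 + ν)) :
    |y + y * ((1 - x * y ^ 2) / 2) * (1 + 3 / 2 * ((1 - x * y ^ 2) / 2)) -
        Real.sqrt (1 / x)| ≤ 20 * y * |ν| ^ 3 := by
  have ht : 0 < 1 + ν := by linarith [neg_abs_le ν]
  rw [mul_sq_eq_one_div_sq_of_sqrt_one_div_eq hx ht.ne' h, h]
  exact abs_halley_error_le hν hy.le
end
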